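/- Bound on the flux terms in the proof of Theorem 1: With the notation of the context, define Λ₂ = c² Σ_{j ∈ ZMod N} ( |φ_j(h)·H_{j+1}| + |φ_j(0)·H_j| ) and Λ₃ = c² Σ_{j ∈ ZMod N} ( |ψ_j(h)·G_{j+1}| + |ψ_j(0)·G_j| ). Then Λ₂ + Λ₃ ≤ 2 · (c/h) · ( 2·max{ c·β·q_u², (τ/c)·(q_v+1)² } + (|α| + |1−α|)·(q_v+1)·q_u ) · (c²‖w‖² + ‖v‖²)^{1/2} · (c²‖φ‖² + ‖ψ‖²)^{1/2}. -/

import Mathlib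

open Polynomial

/-- Squared L² norm of a broken (piecewise polynomial) function on a periodic grid
of `N` elements each of width `h`, in local coordinates `s ∈ [0,h]`. -/
noncomputable def brokenNormSq (N : ℕ) [NeZero N] (h : ℝ)
    (p : ZMod N → Polynomial ℝ) : ℝ :=
  ∑ j : ZMod N, ∫ s in (0:ℝ)..h, (p j).eval s ^ 2

/-- The numerical flux `H_j` of the non-staggered energy-based DG method. -/
noncomputable def Hflux (N : ℕ) [NeZero N] (h c α β : ℝ)
    (w v : ZMod N → Polynomial ℝ) (j : ZMod N) : ℝ :=
  α * (v (j - 1)).eval h + (1 - α) * (v j).eval 0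
    - β * c ^ 2 * ((w (j - 1)).eval h - (w j).eval 0)

/-- The numerical flux `G_j` of the non-staggered energy-based DG method. -/
noncomputable def Gflux (N : ℕ) [NeZero N] (h c α τ : ℝ)
    (w v : ZMod N → Polynomial ℝ) (j : ZMod N) : ℝ :=
  (1 - α) * (w (j - 1)).eval h + α * (w j).eval 0
    - τ / c ^ 2 * ((v (j - 1)).eval h - (v j).eval 0)




namespace DGAux

/-- Integral of a polynomial over `[0,1]`. -/
noncomputable def J (p : ℝ[X]) : ℝ := ∫ x in (0:ℝ)..1, p.eval x

lemma intInt (p : ℝ[X]) (a b : ℝ) :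
    IntervalIntegrable (fun x => p.eval x) MeasureTheory.volume a b :=
  (p.continuous).intervalIntegrable a b

lemma J_add (p q : ℝ[X]) : J (p + q) = J p + J q := by
  simp only [J, eval_add]
  exact intervalIntegral.integral_add (intInt p 0 1) (intInt q 0 1)

lemma J_zero : J 0 = 0 := by simp [J]

lemma J_C_mul (a : ℝ) (p : ℝ[X]) : J (C a * p) = a * J p := by
  simp only [J, eval_mul, eval_C]
  exact intervalIntegral.integral_const_mul a _

lemma J_sum {ι : Type*} (s : Finset ι) (f : ι → ℝ[X]) :
    J (∑ i ∈ s, f i) = ∑ i ∈ s, J (f i) := by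
  classical
  induction s using Finset.induction_on with
  | empty => simp [J_zero]
  | @insert a s' h ih => rw [Finset.sum_insert h, J_add, ih, Finset.sum_insert h]

lemma J_derivative (p : ℝ[X]) : J (derivative p) = p.eval 1 - p.eval 0 := by
  rw [J]
  exact intervalIntegral.integral_eq_sub_of_hasDerivAt
    (fun x _ => p.hasDerivAt x) (intInt _ 0 1)

lemma J_ibp (p q : ℝ[X]) :
    J (derivative p * q) =
      p.eval 1 * q.eval 1 - p.eval 0 * q.eval 0 - J (p * derivative q) := by
  have h := J_derivative (p * q)
  rw [derivative_mul, J_add] at h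
  simp only [eval_mul] at h
  linarith

/-- Iterated integration by parts. -/
lemma J_ibp_iter (n : ℕ) (p : ℝ[X])
    (hp : ∀ k < n, (derivative^[k] p).eval 0 = 0 ∧ (derivative^[k] p).eval 1 = 0) :
    ∀ f : ℝ[X], J (derivative^[n] p * f) = (-1) ^ n * J (p * derivative^[n] f) := by
  induction n with
  | zero => intro f; simp
  | succ n ih =>
    intro f
    have h1 : derivative^[n + 1] p = derivative (derivative^[n] p) :=
      Function.iterate_succ_apply' _ _ _
    rw [h1, J_ibp]
    have h0 := hp n (Nat.lt_succ_self n)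
    rw [h0.1, h0.2]
    have h2 := ih (fun k hk => hp k (hk.trans (Nat.lt_succ_self n))) (derivative f)
    rw [h2]
    have h3 : derivative^[n] (derivative f) = derivative^[n + 1] f :=
      (Function.iterate_succ_apply _ _ _).symm
    rw [h3]; ring

/-- Unnormalized shifted Legendre polynomial via Rodrigues' formula. -/
noncomputable def Leg (n : ℕ) : ℝ[X] := derivative^[n] (X ^ n * (X - C 1) ^ n)

lemma R_monic (n : ℕ) : (X ^ n * (X - C 1) ^ n : ℝ[X]).Monic :=
  (monic_X_pow n).mul ((monic_X_sub_C 1).pow n)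

lemma R_natDegree (n : ℕ) : (X ^ n * (X - C 1) ^ n : ℝ[X]).natDegree = 2 * n := by
  rw [natDegree_mul (pow_ne_zero n X_ne_zero) (((monic_X_sub_C (1:ℝ)).pow n).ne_zero),
    natDegree_X_pow, natDegree_pow, natDegree_X_sub_C, mul_one, two_mul]

lemma R_coeff_top (n : ℕ) : (X ^ n * (X - C 1) ^ n : ℝ[X]).coeff (2 * n) = 1 := by
  have := (R_monic n).leadingCoeff
  rwa [leadingCoeff, R_natDegree] at this

lemma R_vanish (n k : ℕ) (hk : k < n) :
    (derivative^[k] (X ^ n * (X - C 1) ^ n : ℝ[X])).eval 0 = 0 ∧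
      (derivative^[k] (X ^ n * (X - C 1) ^ n : ℝ[X])).eval 1 = 0 := by
  rw [iterate_derivative_mul]
  constructor
  · rw [eval_finset_sum]
    refine Finset.sum_eq_zero fun i hi => ?_
    rw [Finset.mem_range, Nat.lt_succ_iff] at hi
    have h1 : n - (k - i) ≠ 0 :=
      Nat.sub_ne_zero_of_lt (Nat.lt_of_le_of_lt (Nat.sub_le k i) hk)
    simp [iterate_derivative_X_pow_eq_smul, zero_pow h1]
  · rw [eval_finset_sum]
    refine Finset.sum_eq_zero fun i hi => ?_
    rw [Finset.mem_range, Nat.lt_succ_iff] at hi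
    have h2 : n - i ≠ 0 := Nat.sub_ne_zero_of_lt (Nat.lt_of_le_of_lt hi hk)
    rw [iterate_derivative_X_sub_pow]
    simp [zero_pow h2]

lemma Leg_coeff_self (n : ℕ) : (Leg n).coeff n = ((2 * n).descFactorial n : ℝ) := by
  rw [Leg, coeff_iterate_derivative]
  have : n + n = 2 * n := by ring
  rw [this, R_coeff_top, nsmul_eq_mul, mul_one]

lemma Leg_coeff_zero_of_gt (n m : ℕ) (hm : n < m) : (Leg n).coeff m = 0 := by
  rw [Leg, coeff_iterate_derivative]
  have : (X ^ n * (X - C 1) ^ n : ℝ[X]).coeff (m + n) = 0 := by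
    apply coeff_eq_zero_of_natDegree_lt
    rw [R_natDegree]; omega
  rw [this, smul_zero]

lemma Leg_natDegree_le (n : ℕ) : (Leg n).natDegree ≤ n :=
  natDegree_le_iff_coeff_eq_zero.2 fun m hm => Leg_coeff_zero_of_gt n m hm

/-- Iterated derivative of a polynomial of degree at most `m`, taken `m` times. -/
lemma iterate_derivative_of_natDegree_le (p : ℝ[X]) (m : ℕ) (hp : p.natDegree ≤ m) :
    derivative^[m] p = C ((m.factorial : ℝ) * p.coeff m) := by
  have hdeg : (derivative^[m] p).natDegree ≤ 0 := by
    apply natDegree_le_iff_coeff_eq_zero.2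
    intro k hk
    rw [coeff_iterate_derivative]
    have : p.coeff (k + m) = 0 := coeff_eq_zero_of_natDegree_lt (by omega)
    rw [this, smul_zero]
  have := eq_C_of_natDegree_le_zero hdeg
  rw [this, coeff_iterate_derivative, zero_add, nsmul_eq_mul]
  push_cast [Nat.descFactorial_self]
  try rfl

lemma J_Leg_orth (n : ℕ) (f : ℝ[X]) (hf : f.natDegree < n) : J (Leg n * f) = 0 := by
  rw [Leg, J_ibp_iter n _ (fun k hk => R_vanish n k hk) f,
    iterate_derivative_eq_zero hf, mul_zero, J_zero, mul_zero]

lemma J_beta : ∀ k m : ℕ, J (X ^ m * (C 1 - X) ^ k) =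
    (m.factorial : ℝ) * k.factorial / (m + k + 1).factorial := by
  intro k
  induction k with
  | zero =>
    intro m
    have hder : derivative (C ((m:ℝ)+1)⁻¹ * X ^ (m+1)) = X ^ m := by
      rw [derivative_C_mul, derivative_X_pow, Nat.add_sub_cancel, ← mul_assoc, ← C_mul,
        show ((m+1:ℕ):ℝ) = (m:ℝ)+1 by push_cast; ring,
        inv_mul_cancel₀ (by positivity : ((m:ℝ)+1) ≠ 0), map_one, one_mul]
    have := J_derivative (C ((m:ℝ)+1)⁻¹ * X ^ (m+1))
    rw [hder] at this
    simp only [pow_zero, mul_one, eval_mul, eval_C, eval_pow, eval_X] at this ⊢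
    rw [this]
    rw [Nat.factorial_zero, Nat.add_zero, Nat.factorial_succ]
    push_cast
    rw [one_pow, zero_pow (Nat.succ_ne_zero m)]
    field_simp
    norm_num
  | succ k ih =>
    intro m
    have e1 : derivative (X ^ (m+1) : ℝ[X]) = C ((m:ℝ)+1) * X ^ m := by
      rw [derivative_X_pow, Nat.add_sub_cancel, show ((m+1:ℕ):ℝ) = (m:ℝ)+1 by push_cast; ring]
    have e2 : derivative ((C 1 - X : ℝ[X]) ^ (k+1)) = C (-((k:ℝ)+1)) * (C 1 - X) ^ k := by
      rw [derivative_pow, Nat.add_sub_cancel, derivative_sub, derivative_C, derivative_X,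
        show ((k+1:ℕ):ℝ) = (k:ℝ)+1 by push_cast; ring, C_neg]
      ring
    have hibp := J_ibp (X ^ (m+1)) ((C 1 - X) ^ (k+1))
    rw [e1] at hibp
    have lhs1 : J (C ((m:ℝ)+1) * X ^ m * (C 1 - X) ^ (k+1))
        = ((m:ℝ)+1) * J (X ^ m * (C 1 - X) ^ (k+1)) := by
      rw [mul_assoc, J_C_mul]
    have rhs1 : J (X ^ (m+1) * (C (-((k:ℝ)+1)) * (C 1 - X) ^ k))
        = -(((k:ℝ)+1) * J (X ^ (m+1) * (C 1 - X) ^ k)) := by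
      rw [show (X ^ (m+1) * (C (-((k:ℝ)+1)) * (C 1 - X) ^ k)) =
        C (-((k:ℝ)+1)) * (X ^ (m+1) * (C 1 - X) ^ k) by ring, J_C_mul]
      ring
    rw [e2, lhs1, rhs1] at hibp
    have hev : (X ^ (m+1) : ℝ[X]).eval 1 * ((C 1 - X : ℝ[X]) ^ (k+1)).eval 1
        - (X ^ (m+1) : ℝ[X]).eval 0 * ((C 1 - X : ℝ[X]) ^ (k+1)).eval 0 = 0 := by
      simp [zero_pow (Nat.succ_ne_zero m), zero_pow (Nat.succ_ne_zero k)]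
    rw [hev] at hibp
    have := ih (m + 1)
    rw [this] at hibp
    have goal : J (X ^ m * (C 1 - X) ^ (k+1)) =
        ((k:ℝ)+1) / ((m:ℝ)+1) * ((m+1).factorial * k.factorial / ((m+1) + k + 1).factorial) := by
      have hm1 : ((m:ℝ)+1) ≠ 0 := by positivity
      field_simp at hibp ⊢
      push_cast at hibp ⊢
      linarith [hibp]
    rw [goal]
    have h1 : ((m+1) + k + 1) = (m + (k+1) + 1) := by omega
    rw [h1, Nat.factorial_succ (m), Nat.factorial_succ k]
    have hm1 : ((m:ℝ)+1) ≠ 0 := by positivity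
    push_cast
    field_simp

lemma desc_fact (n : ℕ) : (n.factorial : ℝ) * ((2 * n).descFactorial n : ℝ) =
    ((2 * n).factorial : ℝ) := by
  have h := Nat.factorial_mul_descFactorial (show n ≤ 2 * n by omega)
  have h2 : 2 * n - n = n := by omega
  rw [h2] at h
  exact_mod_cast congrArg (fun x : ℕ => (x : ℝ)) h

lemma J_R (n : ℕ) : J (X ^ n * (X - C 1) ^ n) =
    (-1) ^ n * ((n.factorial : ℝ) * n.factorial / (2 * n + 1).factorial) := by
  have e : (X ^ n * (X - C 1) ^ n : ℝ[X]) = C ((-1 : ℝ) ^ n) * (X ^ n * (C 1 - X) ^ n) := by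
    rw [show (X - C 1 : ℝ[X]) = -(C 1 - X) by ring, neg_pow]
    rw [map_pow, C_neg, map_one]
    ring
  rw [e, J_C_mul, J_beta n n]
  have : n + n + 1 = 2 * n + 1 := by omega
  rw [this]

lemma J_Leg_sq (n : ℕ) : J (Leg n * Leg n) = (n.factorial : ℝ) ^ 2 / (2 * n + 1) := by
  have h1 : J (Leg n * Leg n) = (-1) ^ n * J ((X ^ n * (X - C 1) ^ n) * derivative^[n] (Leg n)) := by
    rw [Leg, J_ibp_iter n _ (fun k hk => R_vanish n k hk)]
  have h2 : derivative^[n] (Leg n) = C ((n.factorial : ℝ) * ((2 * n).descFactorial n : ℝ)) := by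
    rw [iterate_derivative_of_natDegree_le _ n (Leg_natDegree_le n), Leg_coeff_self]
  rw [h1, h2, desc_fact, mul_comm (X ^ n * (X - C 1) ^ n), J_C_mul, J_R]
  have hfac : ((2 * n + 1).factorial : ℝ) = (2 * n + 1) * (2 * n).factorial := by
    rw [Nat.factorial_succ]; push_cast; ring
  rw [hfac]
  have h3 : ((2 * n).factorial : ℝ) ≠ 0 := by positivity
  have h4 : ((2 * n : ℕ) : ℝ) + 1 ≠ 0 := by positivity
  have h5 : ((-1 : ℝ)) ^ n * (-1 : ℝ) ^ n = 1 := by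
    rw [← pow_add]; exact (neg_one_pow_eq_one_iff_even (by norm_num)).2 (Even.add_self n)
  field_simp
  push_cast
  linear_combination h5

lemma Leg_eval_one (n : ℕ) : (Leg n).eval 1 = (n.factorial : ℝ) := by
  rw [Leg, iterate_derivative_mul, eval_finset_sum]
  rw [Finset.sum_eq_single n]
  · rw [Nat.choose_self, one_smul, eval_mul, Nat.sub_self, Function.iterate_zero_apply,
      iterate_derivative_X_sub_pow_self, eval_pow, eval_X, one_pow, one_mul]
    simp
  · intro i hi hne
    rw [Finset.mem_range, Nat.lt_succ_iff] at hi
    have h2 : n - i ≠ 0 := Nat.sub_ne_zero_of_lt (lt_of_le_of_ne hi hne)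
    rw [iterate_derivative_X_sub_pow]
    simp [zero_pow h2]
  · intro h
    exact absurd (Finset.self_mem_range_succ n) h

lemma Leg_eval_zero (n : ℕ) : (Leg n).eval 0 = (-1 : ℝ) ^ n * (n.factorial : ℝ) := by
  rw [Leg, iterate_derivative_mul, eval_finset_sum]
  rw [Finset.sum_eq_single 0]
  · rw [Nat.choose_zero_right, one_smul, eval_mul, Nat.sub_zero, Function.iterate_zero_apply,
      iterate_derivative_X_pow_eq_smul, Nat.descFactorial_self, Nat.sub_self, pow_zero]
    simp [mul_comm]
  · intro i hi hne
    have h1 : n - (n - i) ≠ 0 := by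
      rw [Finset.mem_range, Nat.lt_succ_iff] at hi
      omega
    rw [iterate_derivative_X_pow_eq_smul]
    simp [zero_pow h1]
  · intro h
    exact absurd (Finset.mem_range.2 (Nat.succ_pos n)) h

lemma Leg_eval_sq (n : ℕ) (e : ℝ) (he : e = 0 ∨ e = 1) :
    (Leg n).eval e ^ 2 = (n.factorial : ℝ) ^ 2 := by
  rcases he with rfl | rfl
  · rw [Leg_eval_zero, mul_pow, ← pow_mul, pow_mul', neg_one_sq, one_pow, one_mul]
  · rw [Leg_eval_one]

lemma J_Leg_mul_Leg (k l : ℕ) (hkl : k ≠ l) : J (Leg k * Leg l) = 0 := by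
  rcases Nat.lt_or_ge k l with h | h
  · rw [mul_comm]
    exact J_Leg_orth l (Leg k) (lt_of_le_of_lt (Leg_natDegree_le k) h)
  · exact J_Leg_orth k (Leg l) (lt_of_le_of_lt (Leg_natDegree_le l) (lt_of_le_of_ne h (Ne.symm hkl)))

lemma Leg_lc_ne (n : ℕ) : (((2 * n).descFactorial n : ℝ)) ≠ 0 := by
  have : (2 * n).descFactorial n ≠ 0 := by
    simp [Nat.descFactorial_eq_zero_iff_lt]; omega
  exact_mod_cast this

lemma exists_leg_rep : ∀ q : ℕ, ∀ p : ℝ[X], p.natDegree ≤ q →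
    ∃ a : ℕ → ℝ, p = ∑ k ∈ Finset.range (q + 1), C (a k) * Leg k := by
  intro q
  induction q with
  | zero =>
    intro p hp
    refine ⟨fun _ => p.coeff 0, ?_⟩
    rw [Finset.sum_range_one]
    have hL : Leg 0 = 1 := by simp [Leg]
    rw [hL, mul_one]
    exact eq_C_of_natDegree_le_zero hp
  | succ q ih =>
    intro p hp
    set b : ℝ := p.coeff (q + 1) / ((2 * (q + 1)).descFactorial (q + 1) : ℝ) with hb
    have hdeg : (p - C b * Leg (q + 1)).natDegree ≤ q := by
      apply natDegree_le_iff_coeff_eq_zero.2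
      intro m hm
      rw [coeff_sub, coeff_C_mul]
      rcases Nat.lt_or_ge (q + 1) m with h | h
      · rw [Leg_coeff_zero_of_gt _ _ h, mul_zero,
          coeff_eq_zero_of_natDegree_lt (lt_of_le_of_lt hp h), sub_zero]
      · have hm2 : m = q + 1 := by omega
        subst hm2
        rw [Leg_coeff_self, hb, div_mul_cancel₀ _ (Leg_lc_ne (q + 1)), sub_self]
    obtain ⟨a, ha⟩ := ih _ hdeg
    refine ⟨Function.update a (q + 1) b, ?_⟩
    rw [Finset.sum_range_succ, Function.update_self]
    have : ∑ k ∈ Finset.range (q + 1), C (Function.update a (q + 1) b k) * Leg k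
        = ∑ k ∈ Finset.range (q + 1), C (a k) * Leg k := by
      refine Finset.sum_congr rfl fun k hk => ?_
      rw [Finset.mem_range] at hk
      rw [Function.update_of_ne (by omega) ]
    rw [this, ← ha]
    ring

lemma sum_odd_sq (n : ℕ) : ∑ k ∈ Finset.range n, (2 * (k : ℝ) + 1) = (n : ℝ) ^ 2 := by
  induction n with
  | zero => simp
  | succ n ih => rw [Finset.sum_range_succ, ih]; push_cast; ring

/-- Sharp trace inequality on `[0,1]`. -/
lemma trace01 (q : ℕ) (p : ℝ[X]) (hp : p.natDegree ≤ q) (e : ℝ) (he : e = 0 ∨ e = 1) :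
    p.eval e ^ 2 ≤ ((q : ℝ) + 1) ^ 2 * J (p * p) := by
  obtain ⟨a, ha⟩ := exists_leg_rep q p hp
  subst ha
  set s := Finset.range (q + 1) with hs
  -- value of J (p * p)
  have hJ : J ((∑ k ∈ s, C (a k) * Leg k) * ∑ l ∈ s, C (a l) * Leg l)
      = ∑ k ∈ s, a k ^ 2 * ((k.factorial : ℝ) ^ 2 / (2 * k + 1)) := by
    rw [Finset.sum_mul_sum, J_sum]
    refine Finset.sum_congr rfl fun k hk => ?_
    rw [J_sum]
    rw [Finset.sum_eq_single_of_mem k hk]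
    · have : C (a k) * Leg k * (C (a k) * Leg k) = C (a k * a k) * (Leg k * Leg k) := by
        rw [C_mul]; ring
      rw [this, J_C_mul, J_Leg_sq]
      ring
    · intro l hl hne
      have : C (a k) * Leg k * (C (a l) * Leg l) = C (a k * a l) * (Leg k * Leg l) := by
        rw [C_mul]; ring
      rw [this, J_C_mul, J_Leg_mul_Leg k l (Ne.symm hne), mul_zero]
  have hev : (∑ k ∈ s, C (a k) * Leg k).eval e = ∑ k ∈ s, a k * (Leg k).eval e := by
    rw [eval_finset_sum]
    exact Finset.sum_congr rfl fun k _ => by rw [eval_mul, eval_C]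
  rw [hJ, hev]
  -- Cauchy-Schwarz
  have key := Finset.sum_mul_sq_le_sq_mul_sq s
    (fun k => a k * (Leg k).eval e / Real.sqrt (2 * (k : ℝ) + 1))
    (fun k => Real.sqrt (2 * (k : ℝ) + 1))
  have hpos : ∀ k : ℕ, (0:ℝ) < 2 * (k : ℝ) + 1 := fun k => by positivity
  have h1 : ∀ k ∈ s, a k * (Leg k).eval e / Real.sqrt (2 * (k : ℝ) + 1)
      * Real.sqrt (2 * (k : ℝ) + 1) = a k * (Leg k).eval e := fun k _ => by
    field_simp
  rw [Finset.sum_congr rfl h1] at key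
  have h2 : ∀ k ∈ s, (a k * (Leg k).eval e / Real.sqrt (2 * (k : ℝ) + 1)) ^ 2
      = a k ^ 2 * ((k.factorial : ℝ) ^ 2 / (2 * (k : ℝ) + 1)) := fun k _ => by
    rw [div_pow, Real.sq_sqrt (hpos k).le, mul_pow, Leg_eval_sq k e he]
    ring
  rw [Finset.sum_congr rfl h2] at key
  have h3 : ∀ k ∈ s, (Real.sqrt (2 * (k : ℝ) + 1)) ^ 2 = 2 * (k : ℝ) + 1 := fun k _ =>
    Real.sq_sqrt (hpos k).le
  rw [Finset.sum_congr rfl h3, hs, sum_odd_sq] at key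
  calc (∑ k ∈ s, a k * (Leg k).eval e) ^ 2
      ≤ (∑ k ∈ s, a k ^ 2 * ((k.factorial : ℝ) ^ 2 / (2 * (k : ℝ) + 1))) * ((q + 1 : ℕ) : ℝ) ^ 2 := key
    _ = ((q : ℝ) + 1) ^ 2 * ∑ k ∈ s, a k ^ 2 * ((k.factorial : ℝ) ^ 2 / (2 * (k : ℝ) + 1)) := by
        push_cast; ring

/-- Sharp trace inequality on `[0,h]`. -/
lemma trace_h (q : ℕ) (h : ℝ) (hh : 0 < h) (p : ℝ[X]) (hp : p.natDegree ≤ q)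
    (e : ℝ) (he : e = 0 ∨ e = h) :
    p.eval e ^ 2 ≤ ((q : ℝ) + 1) ^ 2 / h * ∫ x in (0:ℝ)..h, p.eval x ^ 2 := by
  set p₁ : ℝ[X] := p.comp (C h * X) with hp₁
  have hdeg : p₁.natDegree ≤ q := by
    refine le_trans natDegree_comp_le ?_
    have h1 : (C h * X : ℝ[X]).natDegree ≤ 1 :=
      le_trans (natDegree_mul_le) (by simp)
    calc p.natDegree * (C h * X).natDegree ≤ q * 1 := Nat.mul_le_mul hp h1
      _ = q := mul_one q
  have hev : ∀ x : ℝ, p₁.eval x = p.eval (h * x) := fun x => by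
    rw [hp₁, eval_comp, eval_mul, eval_C, eval_X]
  have hJ : J (p₁ * p₁) = h⁻¹ * ∫ x in (0:ℝ)..h, p.eval x ^ 2 := by
    have h1 : J (p₁ * p₁) = ∫ x in (0:ℝ)..1, p.eval (h * x) ^ 2 := by
      rw [J]
      refine intervalIntegral.integral_congr fun x _ => ?_
      rw [eval_mul, hev, sq]
    rw [h1]
    have h2 := intervalIntegral.integral_comp_mul_left (fun t => p.eval t ^ 2) (ne_of_gt hh)
      (a := 0) (b := 1)
    rw [mul_zero, mul_one] at h2
    rw [h2, smul_eq_mul]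
  have he1 : p.eval e = p₁.eval (if e = 0 then 0 else 1) := by
    rcases he with rfl | rfl
    · simp [hev]
    · rw [if_neg (ne_of_gt hh), hev, mul_one]
  rw [he1]
  have := trace01 q p₁ hdeg (if e = 0 then 0 else 1) (by split <;> simp)
  rw [hJ] at this
  calc p₁.eval (if e = 0 then 0 else 1) ^ 2
      ≤ ((q:ℝ)+1)^2 * (h⁻¹ * ∫ x in (0:ℝ)..h, p.eval x ^ 2) := this
    _ = ((q:ℝ)+1)^2 / h * ∫ x in (0:ℝ)..h, p.eval x ^ 2 := by ring

lemma integral_sq_nonneg (p : ℝ[X]) (h : ℝ) (hh : 0 < h) :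
    0 ≤ ∫ x in (0:ℝ)..h, p.eval x ^ 2 :=
  intervalIntegral.integral_nonneg hh.le (fun x _ => sq_nonneg _)

/-- Trace inequality, absolute-value form. -/
lemma trace_abs (q : ℕ) (h : ℝ) (hh : 0 < h) (p : ℝ[X]) (hp : p.natDegree ≤ q)
    (e : ℝ) (he : e = 0 ∨ e = h) :
    |p.eval e| ≤ ((q : ℝ) + 1) / Real.sqrt h * Real.sqrt (∫ x in (0:ℝ)..h, p.eval x ^ 2) := by
  have h1 := trace_h q h hh p hp e he
  have h2 : |p.eval e| = Real.sqrt (p.eval e ^ 2) := (Real.sqrt_sq_eq_abs _).symm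
  rw [h2]
  have h3 : Real.sqrt (((q : ℝ) + 1) ^ 2 / h * ∫ x in (0:ℝ)..h, p.eval x ^ 2)
      = ((q : ℝ) + 1) / Real.sqrt h * Real.sqrt (∫ x in (0:ℝ)..h, p.eval x ^ 2) := by
    rw [Real.sqrt_mul (by positivity), Real.sqrt_div (sq_nonneg _),
      Real.sqrt_sq (by positivity : (0:ℝ) ≤ (q : ℝ) + 1)]
  rw [← h3]
  exact Real.sqrt_le_sqrt h1

lemma cs_sum {ι : Type*} [Fintype ι] (f g : ι → ℝ) :
    ∑ i, f i * g i ≤ Real.sqrt (∑ i, f i ^ 2) * Real.sqrt (∑ i, g i ^ 2) := by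
  have key := Finset.sum_mul_sq_le_sq_mul_sq Finset.univ f g
  calc ∑ i, f i * g i ≤ |∑ i, f i * g i| := le_abs_self _
    _ = Real.sqrt ((∑ i, f i * g i) ^ 2) := (Real.sqrt_sq_eq_abs _).symm
    _ ≤ Real.sqrt ((∑ i, f i ^ 2) * ∑ i, g i ^ 2) := Real.sqrt_le_sqrt key
    _ = Real.sqrt (∑ i, f i ^ 2) * Real.sqrt (∑ i, g i ^ 2) :=
        Real.sqrt_mul (by positivity) _

lemma sqrt_pair_combine (a b x y : ℝ) (ha : 0 ≤ a) (hb : 0 ≤ b) (hx : 0 ≤ x) (hy : 0 ≤ y) :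
    Real.sqrt a * Real.sqrt x + Real.sqrt b * Real.sqrt y
      ≤ Real.sqrt (a + b) * Real.sqrt (x + y) := by
  have key := cs_sum (ι := Fin 2) ![Real.sqrt a, Real.sqrt b] ![Real.sqrt x, Real.sqrt y]
  simp only [Fin.sum_univ_two, Matrix.cons_val_zero, Matrix.cons_val_one, Matrix.head_cons] at key
  rwa [Real.sq_sqrt ha, Real.sq_sqrt hb, Real.sq_sqrt hx, Real.sq_sqrt hy] at key

lemma sum_shift_sq {N : ℕ} [NeZero N] (x : ZMod N → ℝ) (k : ZMod N) :
    ∑ j : ZMod N, x (j + k) ^ 2 = ∑ j : ZMod N, x j ^ 2 :=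
  Fintype.sum_equiv (Equiv.addRight k) _ _ (fun j => rfl)

/-- Master bound for one group of flux cross terms. -/
lemma group_bound {N : ℕ} [NeZero N] (c₁ c₂ m : ℝ) (h₁ : 0 ≤ c₁) (h₂ : 0 ≤ c₂)
    (h₁m : c₁ ≤ m) (h₂m : c₂ ≤ m) (f g x y : ZMod N → ℝ) (k₁ k₂ : ZMod N) :
    ∑ j : ZMod N, (c₁ * (f j * x (j + k₁)) + c₂ * (g j * y (j + k₂)))
      ≤ m * (Real.sqrt (∑ j : ZMod N, (f j ^ 2 + g j ^ 2))
          * Real.sqrt (∑ j : ZMod N, (x j ^ 2 + y j ^ 2))) := by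
  have hf2 : (0:ℝ) ≤ ∑ j : ZMod N, f j ^ 2 := by positivity
  have hg2 : (0:ℝ) ≤ ∑ j : ZMod N, g j ^ 2 := by positivity
  have hx2 : (0:ℝ) ≤ ∑ j : ZMod N, x j ^ 2 := by positivity
  have hy2 : (0:ℝ) ≤ ∑ j : ZMod N, y j ^ 2 := by positivity
  have s1 : ∑ j : ZMod N, f j * x (j + k₁)
      ≤ Real.sqrt (∑ j : ZMod N, f j ^ 2) * Real.sqrt (∑ j : ZMod N, x j ^ 2) := by
    have := cs_sum f (fun j => x (j + k₁))
    rwa [sum_shift_sq x k₁] at this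
  have s2 : ∑ j : ZMod N, g j * y (j + k₂)
      ≤ Real.sqrt (∑ j : ZMod N, g j ^ 2) * Real.sqrt (∑ j : ZMod N, y j ^ 2) := by
    have := cs_sum g (fun j => y (j + k₂))
    rwa [sum_shift_sq y k₂] at this
  calc ∑ j : ZMod N, (c₁ * (f j * x (j + k₁)) + c₂ * (g j * y (j + k₂)))
      = c₁ * (∑ j : ZMod N, f j * x (j + k₁)) + c₂ * (∑ j : ZMod N, g j * y (j + k₂)) := by
        rw [Finset.sum_add_distrib, Finset.mul_sum, Finset.mul_sum]
    _ ≤ c₁ * (Real.sqrt (∑ j : ZMod N, f j ^ 2) * Real.sqrt (∑ j : ZMod N, x j ^ 2))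
        + c₂ * (Real.sqrt (∑ j : ZMod N, g j ^ 2) * Real.sqrt (∑ j : ZMod N, y j ^ 2)) := by
        gcongr
    _ ≤ m * (Real.sqrt (∑ j : ZMod N, f j ^ 2) * Real.sqrt (∑ j : ZMod N, x j ^ 2))
        + m * (Real.sqrt (∑ j : ZMod N, g j ^ 2) * Real.sqrt (∑ j : ZMod N, y j ^ 2)) := by
        gcongr <;> positivity
    _ = m * (Real.sqrt (∑ j : ZMod N, f j ^ 2) * Real.sqrt (∑ j : ZMod N, x j ^ 2)
        + Real.sqrt (∑ j : ZMod N, g j ^ 2) * Real.sqrt (∑ j : ZMod N, y j ^ 2)) := by ring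
    _ ≤ m * (Real.sqrt ((∑ j : ZMod N, f j ^ 2) + ∑ j : ZMod N, g j ^ 2)
        * Real.sqrt ((∑ j : ZMod N, x j ^ 2) + ∑ j : ZMod N, y j ^ 2)) := by
        have hm : 0 ≤ m := le_trans h₁ h₁m
        exact mul_le_mul_of_nonneg_left (sqrt_pair_combine _ _ _ _ hf2 hg2 hx2 hy2) hm
    _ = m * (Real.sqrt (∑ j : ZMod N, (f j ^ 2 + g j ^ 2))
        * Real.sqrt (∑ j : ZMod N, (x j ^ 2 + y j ^ 2))) := by
        rw [Finset.sum_add_distrib, Finset.sum_add_distrib]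

end DGAux

section MainProof
open DGAux Finset

set_option maxHeartbeats 4000000 in
/-- Bound on the flux terms `Λ₂ + Λ₃` in the proof of Theorem 1. -/
theorem nonstaggered_flux_terms_bound
    (N : ℕ) [NeZero N] (hN : 1 ≤ N) (h c : ℝ) (hh : 0 < h) (hc : 0 < c)
    (qu qv : ℕ) (hqu : 1 ≤ qu) (α β τ : ℝ) (hβ : 0 ≤ β) (hτ : 0 ≤ τ)
    (w φ v ψ : ZMod N → Polynomial ℝ)
    (hw : ∀ j, (w j).natDegree ≤ qu - 1) (hφ : ∀ j, (φ j).natDegree ≤ qu - 1)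
    (hv : ∀ j, (v j).natDegree ≤ qv) (hψ : ∀ j, (ψ j).natDegree ≤ qv)
    (Λ₂ Λ₃ : ℝ)
    (hΛ₂ : Λ₂ = c ^ 2 * ∑ j : ZMod N,
        (|(φ j).eval h * Hflux N h c α β w v (j + 1)|
          + |(φ j).eval 0 * Hflux N h c α β w v j|))
    (hΛ₃ : Λ₃ = c ^ 2 * ∑ j : ZMod N,
        (|(ψ j).eval h * Gflux N h c α τ w v (j + 1)|
          + |(ψ j).eval 0 * Gflux N h c α τ w v j|)) :
    Λ₂ + Λ₃ ≤ 2 * (c / h)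
        * (2 * max (c * β * (qu : ℝ) ^ 2) (τ / c * ((qv : ℝ) + 1) ^ 2)
            + (|α| + |1 - α|) * ((qv : ℝ) + 1) * (qu : ℝ))
        * Real.sqrt (c ^ 2 * brokenNormSq N h w + brokenNormSq N h v)
        * Real.sqrt (c ^ 2 * brokenNormSq N h φ + brokenNormSq N h ψ) := by
  classical
  -- elementwise L² norms
  obtain ⟨nw, hnw⟩ : ∃ f : ZMod N → ℝ,
      f = fun j => Real.sqrt (∫ x in (0:ℝ)..h, (w j).eval x ^ 2) := ⟨_, rfl⟩
  obtain ⟨nv, hnv⟩ : ∃ f : ZMod N → ℝ,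
      f = fun j => Real.sqrt (∫ x in (0:ℝ)..h, (v j).eval x ^ 2) := ⟨_, rfl⟩
  obtain ⟨nφ, hnφ⟩ : ∃ f : ZMod N → ℝ,
      f = fun j => Real.sqrt (∫ x in (0:ℝ)..h, (φ j).eval x ^ 2) := ⟨_, rfl⟩
  obtain ⟨nψ, hnψ⟩ : ∃ f : ZMod N → ℝ,
      f = fun j => Real.sqrt (∫ x in (0:ℝ)..h, (ψ j).eval x ^ 2) := ⟨_, rfl⟩
  have nw0 : ∀ j, 0 ≤ nw j := fun j => by rw [hnw]; exact Real.sqrt_nonneg _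
  have nv0 : ∀ j, 0 ≤ nv j := fun j => by rw [hnv]; exact Real.sqrt_nonneg _
  have nφ0 : ∀ j, 0 ≤ nφ j := fun j => by rw [hnφ]; exact Real.sqrt_nonneg _
  have nψ0 : ∀ j, 0 ≤ nψ j := fun j => by rw [hnψ]; exact Real.sqrt_nonneg _
  have hsh : 0 < Real.sqrt h := Real.sqrt_pos.2 hh
  have hss : Real.sqrt h * Real.sqrt h = h := Real.mul_self_sqrt hh.le
  have hqu' : ((qu - 1 : ℕ) : ℝ) + 1 = (qu : ℝ) := by
    rw [Nat.cast_sub hqu]; ring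
  -- trace bounds
  have tw : ∀ j, ∀ e : ℝ, (e = 0 ∨ e = h) →
      |(w j).eval e| ≤ (qu : ℝ) / Real.sqrt h * nw j := by
    intro j e he
    have := trace_abs (qu - 1) h hh (w j) (hw j) e he
    rw [hnw]
    rwa [hqu'] at this
  have tφ : ∀ j, ∀ e : ℝ, (e = 0 ∨ e = h) →
      |(φ j).eval e| ≤ (qu : ℝ) / Real.sqrt h * nφ j := by
    intro j e he
    have := trace_abs (qu - 1) h hh (φ j) (hφ j) e he
    rw [hnφ]
    rwa [hqu'] at this
  have tv : ∀ j, ∀ e : ℝ, (e = 0 ∨ e = h) →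
      |(v j).eval e| ≤ ((qv : ℝ) + 1) / Real.sqrt h * nv j :=
    fun j e he => by rw [hnv]; exact trace_abs qv h hh (v j) (hv j) e he
  have tψ : ∀ j, ∀ e : ℝ, (e = 0 ∨ e = h) →
      |(ψ j).eval e| ≤ ((qv : ℝ) + 1) / Real.sqrt h * nψ j :=
    fun j e he => by rw [hnψ]; exact trace_abs qv h hh (ψ j) (hψ j) e he
  -- pointwise flux bounds
  obtain ⟨HB, hHB⟩ : ∃ f : ZMod N → ℝ,
      f = fun i => |α| * ((qv:ℝ)+1) * nv (i - 1) + |1 - α| * ((qv:ℝ)+1) * nv i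
        + β * c^2 * (qu:ℝ) * (nw (i-1) + nw i) := ⟨_, rfl⟩
  obtain ⟨GB, hGB⟩ : ∃ f : ZMod N → ℝ,
      f = fun i => |1 - α| * (qu:ℝ) * nw (i - 1) + |α| * (qu:ℝ) * nw i
        + τ / c^2 * ((qv:ℝ)+1) * (nv (i-1) + nv i) := ⟨_, rfl⟩
  have tri : ∀ a b d : ℝ, |a + b - d| ≤ |a| + |b| + |d| := by
    intro a b d
    rw [sub_eq_add_neg]
    refine (abs_add_le _ _).trans ?_
    rw [abs_neg]
    exact add_le_add_left (abs_add_le a b) _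
  have tri2 : ∀ x y : ℝ, |x - y| ≤ |x| + |y| := by
    intro x y
    rw [sub_eq_add_neg]
    refine (abs_add_le _ _).trans ?_
    rw [abs_neg]
  have hH : ∀ i, |Hflux N h c α β w v i| ≤ (Real.sqrt h)⁻¹ * HB i := by
    intro i
    have t1 := tv (i-1) h (Or.inr rfl)
    have t2 := tv i 0 (Or.inl rfl)
    have t3 := tw (i-1) h (Or.inr rfl)
    have t4 := tw i 0 (Or.inl rfl)
    calc |Hflux N h c α β w v i|
        ≤ |α * (v (i-1)).eval h| + |(1-α) * (v i).eval 0|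
          + |β * c^2 * ((w (i-1)).eval h - (w i).eval 0)| := tri _ _ _
      _ = |α| * |(v (i-1)).eval h| + |1-α| * |(v i).eval 0|
          + β * c^2 * |(w (i-1)).eval h - (w i).eval 0| := by
          rw [abs_mul, abs_mul, abs_mul, abs_of_nonneg (by positivity : (0:ℝ) ≤ β * c^2)]
      _ ≤ |α| * |(v (i-1)).eval h| + |1-α| * |(v i).eval 0|
          + β * c^2 * (|(w (i-1)).eval h| + |(w i).eval 0|) := by
          have := tri2 ((w (i-1)).eval h) ((w i).eval 0)
          have hb : (0:ℝ) ≤ β * c^2 := by positivity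
          nlinarith [this, hb]
      _ ≤ |α| * (((qv:ℝ)+1) / Real.sqrt h * nv (i-1)) + |1-α| * (((qv:ℝ)+1) / Real.sqrt h * nv i)
          + β * c^2 * ((qu:ℝ) / Real.sqrt h * nw (i-1) + (qu:ℝ) / Real.sqrt h * nw i) := by
          gcongr <;> positivity
      _ = (Real.sqrt h)⁻¹ * HB i := by
          rw [hHB]
          field_simp
  have hG : ∀ i, |Gflux N h c α τ w v i| ≤ (Real.sqrt h)⁻¹ * GB i := by
    intro i
    have t1 := tw (i-1) h (Or.inr rfl)
    have t2 := tw i 0 (Or.inl rfl)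
    have t3 := tv (i-1) h (Or.inr rfl)
    have t4 := tv i 0 (Or.inl rfl)
    calc |Gflux N h c α τ w v i|
        ≤ |(1-α) * (w (i-1)).eval h| + |α * (w i).eval 0|
          + |τ / c^2 * ((v (i-1)).eval h - (v i).eval 0)| := tri _ _ _
      _ = |1-α| * |(w (i-1)).eval h| + |α| * |(w i).eval 0|
          + τ / c^2 * |(v (i-1)).eval h - (v i).eval 0| := by
          rw [abs_mul, abs_mul, abs_mul, abs_of_nonneg (by positivity : (0:ℝ) ≤ τ / c^2)]
      _ ≤ |1-α| * |(w (i-1)).eval h| + |α| * |(w i).eval 0|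
          + τ / c^2 * (|(v (i-1)).eval h| + |(v i).eval 0|) := by
          have := tri2 ((v (i-1)).eval h) ((v i).eval 0)
          have hb : (0:ℝ) ≤ τ / c^2 := by positivity
          nlinarith [this, hb]
      _ ≤ |1-α| * ((qu:ℝ) / Real.sqrt h * nw (i-1)) + |α| * ((qu:ℝ) / Real.sqrt h * nw i)
          + τ / c^2 * (((qv:ℝ)+1) / Real.sqrt h * nv (i-1) + ((qv:ℝ)+1) / Real.sqrt h * nv i) := by
          gcongr <;> positivity
      _ = (Real.sqrt h)⁻¹ * GB i := by
          rw [hGB]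
          field_simp

  -- global Cauchy–Schwarz setup
  obtain ⟨cnφ, hcnφ⟩ : ∃ f : ZMod N → ℝ, f = fun j => c * nφ j := ⟨_, rfl⟩
  obtain ⟨cnw, hcnw⟩ : ∃ f : ZMod N → ℝ, f = fun j => c * nw j := ⟨_, rfl⟩
  obtain ⟨K, hK⟩ : ∃ x : ℝ, x = ((qv:ℝ)+1) * (qu:ℝ) := ⟨_, rfl⟩
  have hK0 : 0 ≤ K := by rw [hK]; positivity
  obtain ⟨M, hM⟩ : ∃ x : ℝ, x = max (c * β * (qu : ℝ) ^ 2) (τ / c * ((qv : ℝ) + 1) ^ 2) := ⟨_, rfl⟩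
  have hM1 : c * β * (qu : ℝ) ^ 2 ≤ M := hM ▸ le_max_left _ _
  have hM2 : τ / c * ((qv : ℝ) + 1) ^ 2 ≤ M := hM ▸ le_max_right _ _
  have hb0 : (0:ℝ) ≤ c * β * (qu : ℝ) ^ 2 :=
    mul_nonneg (mul_nonneg hc.le hβ) (by positivity)
  have ht0 : (0:ℝ) ≤ τ / c * ((qv : ℝ) + 1) ^ 2 :=
    mul_nonneg (div_nonneg hτ hc.le) (by positivity)
  have hSB : (∑ j : ZMod N, (cnφ j ^ 2 + nψ j ^ 2))
      = c ^ 2 * brokenNormSq N h φ + brokenNormSq N h ψ := by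
    rw [Finset.sum_add_distrib, brokenNormSq, brokenNormSq, Finset.mul_sum]
    congr 1
    · refine Finset.sum_congr rfl fun j _ => ?_
      simp only [hcnφ, hnφ, mul_pow]
      rw [Real.sq_sqrt (integral_sq_nonneg _ h hh)]
    · refine Finset.sum_congr rfl fun j _ => ?_
      simp only [hnψ]
      rw [Real.sq_sqrt (integral_sq_nonneg _ h hh)]
  have hSA : (∑ j : ZMod N, (nv j ^ 2 + cnw j ^ 2))
      = c ^ 2 * brokenNormSq N h w + brokenNormSq N h v := by
    rw [Finset.sum_add_distrib, brokenNormSq, brokenNormSq, Finset.mul_sum, add_comm]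
    congr 1
    · refine Finset.sum_congr rfl fun j _ => ?_
      simp only [hcnw, hnw, mul_pow]
      rw [Real.sq_sqrt (integral_sq_nonneg _ h hh)]
    · refine Finset.sum_congr rfl fun j _ => ?_
      simp only [hnv]
      rw [Real.sq_sqrt (integral_sq_nonneg _ h hh)]
  have hSA' : (∑ j : ZMod N, (cnw j ^ 2 + nv j ^ 2))
      = c ^ 2 * brokenNormSq N h w + brokenNormSq N h v := by
    rw [← hSA]
    exact Finset.sum_congr rfl fun j _ => by ring

  -- step 1 : elementwise bound
  have step1 : Λ₂ + Λ₃ ≤ ∑ j : ZMod N, c^2/h *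
      ((qu:ℝ) * nφ j * (HB j + HB (j+1)) + ((qv:ℝ)+1) * nψ j * (GB j + GB (j+1))) := by
    rw [hΛ₂, hΛ₃, Finset.mul_sum, Finset.mul_sum, ← Finset.sum_add_distrib]
    apply Finset.sum_le_sum
    intro j _
    have e1 : |(φ j).eval h * Hflux N h c α β w v (j+1)|
        ≤ ((qu:ℝ)/Real.sqrt h * nφ j) * ((Real.sqrt h)⁻¹ * HB (j+1)) := by
      rw [abs_mul]
      exact mul_le_mul (tφ j h (Or.inr rfl)) (hH (j+1)) (abs_nonneg _)
        (mul_nonneg (by positivity) (nφ0 j))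
    have e2 : |(φ j).eval 0 * Hflux N h c α β w v j|
        ≤ ((qu:ℝ)/Real.sqrt h * nφ j) * ((Real.sqrt h)⁻¹ * HB j) := by
      rw [abs_mul]
      exact mul_le_mul (tφ j 0 (Or.inl rfl)) (hH j) (abs_nonneg _)
        (mul_nonneg (by positivity) (nφ0 j))
    have e3 : |(ψ j).eval h * Gflux N h c α τ w v (j+1)|
        ≤ (((qv:ℝ)+1)/Real.sqrt h * nψ j) * ((Real.sqrt h)⁻¹ * GB (j+1)) := by
      rw [abs_mul]
      exact mul_le_mul (tψ j h (Or.inr rfl)) (hG (j+1)) (abs_nonneg _)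
        (mul_nonneg (by positivity) (nψ0 j))
    have e4 : |(ψ j).eval 0 * Gflux N h c α τ w v j|
        ≤ (((qv:ℝ)+1)/Real.sqrt h * nψ j) * ((Real.sqrt h)⁻¹ * GB j) := by
      rw [abs_mul]
      exact mul_le_mul (tψ j 0 (Or.inl rfl)) (hG j) (abs_nonneg _)
        (mul_nonneg (by positivity) (nψ0 j))
    have hc2 : (0:ℝ) ≤ c^2 := sq_nonneg c
    have sum_le := add_le_add (add_le_add e1 e2) (add_le_add e3 e4)
    calc c ^ 2 * (|(φ j).eval h * Hflux N h c α β w v (j + 1)|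
            + |(φ j).eval 0 * Hflux N h c α β w v j|)
          + c ^ 2 * (|(ψ j).eval h * Gflux N h c α τ w v (j + 1)|
            + |(ψ j).eval 0 * Gflux N h c α τ w v j|)
        = c^2 * ((|(φ j).eval h * Hflux N h c α β w v (j + 1)|
            + |(φ j).eval 0 * Hflux N h c α β w v j|)
          + (|(ψ j).eval h * Gflux N h c α τ w v (j + 1)|
            + |(ψ j).eval 0 * Gflux N h c α τ w v j|)) := by ring
      _ ≤ c^2 * ((((qu:ℝ)/Real.sqrt h * nφ j) * ((Real.sqrt h)⁻¹ * HB (j+1))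
            + ((qu:ℝ)/Real.sqrt h * nφ j) * ((Real.sqrt h)⁻¹ * HB j))
          + ((((qv:ℝ)+1)/Real.sqrt h * nψ j) * ((Real.sqrt h)⁻¹ * GB (j+1))
            + (((qv:ℝ)+1)/Real.sqrt h * nψ j) * ((Real.sqrt h)⁻¹ * GB j))) :=
          mul_le_mul_of_nonneg_left sum_le hc2
      _ = c^2/h * ((qu:ℝ) * nφ j * (HB j + HB (j+1))
            + ((qv:ℝ)+1) * nψ j * (GB j + GB (j+1))) := by
          have hinv : (Real.sqrt h)⁻¹ * (Real.sqrt h)⁻¹ = h⁻¹ := by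
            rw [← mul_inv, hss]
          linear_combination (c^2 * ((qu:ℝ) * nφ j * (HB j + HB (j+1))
            + ((qv:ℝ)+1) * nψ j * (GB j + GB (j+1)))) * hinv
  -- step 2 : regroup the sum
  have step2 : (∑ j : ZMod N, c^2/h *
      ((qu:ℝ) * nφ j * (HB j + HB (j+1)) + ((qv:ℝ)+1) * nψ j * (GB j + GB (j+1))))
      = c/h * ∑ j : ZMod N,
        ((|α| * K * (cnφ j * nv (j - 1)) + |α| * K * (nψ j * cnw j))
        + (|α| * K * (cnφ j * nv j) + |α| * K * (nψ j * cnw (j + 1)))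
        + (|1 - α| * K * (cnφ j * nv j) + |1 - α| * K * (nψ j * cnw (j - 1)))
        + (|1 - α| * K * (cnφ j * nv (j + 1)) + |1 - α| * K * (nψ j * cnw j))
        + ((c * β * (qu:ℝ)^2) * (cnφ j * cnw (j - 1)) + (c * (τ/c^2) * ((qv:ℝ)+1)^2) * (nψ j * nv (j - 1)))
        + ((c * β * (qu:ℝ)^2) * (cnφ j * cnw j) + (c * (τ/c^2) * ((qv:ℝ)+1)^2) * (nψ j * nv j))
        + ((c * β * (qu:ℝ)^2) * (cnφ j * cnw j) + (c * (τ/c^2) * ((qv:ℝ)+1)^2) * (nψ j * nv j))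
        + ((c * β * (qu:ℝ)^2) * (cnφ j * cnw (j + 1)) + (c * (τ/c^2) * ((qv:ℝ)+1)^2) * (nψ j * nv (j + 1)))) := by
    rw [Finset.mul_sum]
    refine Finset.sum_congr rfl fun j _ => ?_
    simp only [hHB, hGB, hcnφ, hcnw, hK, add_sub_cancel_right]
    ring

  -- step 3 : Cauchy–Schwarz on each group
  have hq0 : (0:ℝ) ≤ |α| * K := mul_nonneg (abs_nonneg _) hK0
  have hq1 : (0:ℝ) ≤ |1 - α| * K := mul_nonneg (abs_nonneg _) hK0
  have htc : c * (τ/c^2) * ((qv:ℝ)+1)^2 = τ/c * ((qv:ℝ)+1)^2 := by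
    field_simp
  have ht0' : (0:ℝ) ≤ c * (τ/c^2) * ((qv:ℝ)+1)^2 := by
    rw [htc]
    exact mul_nonneg (div_nonneg hτ hc.le) (by positivity)
  have hM2' : c * (τ/c^2) * ((qv:ℝ)+1)^2 ≤ M := by rw [htc]; exact hM2
  have hM0 : (0:ℝ) ≤ M := le_trans hb0 hM1
  have B1 : (∑ j : ZMod N, (|α| * K * (cnφ j * nv (j - 1)) + |α| * K * (nψ j * cnw j)))
      ≤ |α| * K * (Real.sqrt (∑ j : ZMod N, (cnφ j ^2 + nψ j ^2))
        * Real.sqrt (∑ j : ZMod N, (nv j ^2 + cnw j ^2))) := by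
    have := group_bound (N := N) (|α| * K) (|α| * K) (|α| * K) hq0 hq0 le_rfl le_rfl
      cnφ nψ nv cnw (-1) 0
    simpa [sub_eq_add_neg] using this
  have B2 : (∑ j : ZMod N, (|α| * K * (cnφ j * nv j) + |α| * K * (nψ j * cnw (j + 1))))
      ≤ |α| * K * (Real.sqrt (∑ j : ZMod N, (cnφ j ^2 + nψ j ^2))
        * Real.sqrt (∑ j : ZMod N, (nv j ^2 + cnw j ^2))) := by
    have := group_bound (N := N) (|α| * K) (|α| * K) (|α| * K) hq0 hq0 le_rfl le_rfl
      cnφ nψ nv cnw 0 1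
    simpa using this
  have B3 : (∑ j : ZMod N, (|1 - α| * K * (cnφ j * nv j) + |1 - α| * K * (nψ j * cnw (j - 1))))
      ≤ |1 - α| * K * (Real.sqrt (∑ j : ZMod N, (cnφ j ^2 + nψ j ^2))
        * Real.sqrt (∑ j : ZMod N, (nv j ^2 + cnw j ^2))) := by
    have := group_bound (N := N) (|1 - α| * K) (|1 - α| * K) (|1 - α| * K) hq1 hq1 le_rfl le_rfl
      cnφ nψ nv cnw 0 (-1)
    simpa [sub_eq_add_neg] using this
  have B4 : (∑ j : ZMod N, (|1 - α| * K * (cnφ j * nv (j + 1)) + |1 - α| * K * (nψ j * cnw j)))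
      ≤ |1 - α| * K * (Real.sqrt (∑ j : ZMod N, (cnφ j ^2 + nψ j ^2))
        * Real.sqrt (∑ j : ZMod N, (nv j ^2 + cnw j ^2))) := by
    have := group_bound (N := N) (|1 - α| * K) (|1 - α| * K) (|1 - α| * K) hq1 hq1 le_rfl le_rfl
      cnφ nψ nv cnw 1 0
    simpa using this
  have B5 : (∑ j : ZMod N, ((c * β * (qu:ℝ)^2) * (cnφ j * cnw (j - 1))
        + (c * (τ/c^2) * ((qv:ℝ)+1)^2) * (nψ j * nv (j - 1))))
      ≤ M * (Real.sqrt (∑ j : ZMod N, (cnφ j ^2 + nψ j ^2))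
        * Real.sqrt (∑ j : ZMod N, (cnw j ^2 + nv j ^2))) := by
    have := group_bound (N := N) (c * β * (qu:ℝ)^2) (c * (τ/c^2) * ((qv:ℝ)+1)^2) M
      hb0 ht0' hM1 hM2' cnφ nψ cnw nv (-1) (-1)
    simpa [sub_eq_add_neg] using this
  have B6 : (∑ j : ZMod N, ((c * β * (qu:ℝ)^2) * (cnφ j * cnw j)
        + (c * (τ/c^2) * ((qv:ℝ)+1)^2) * (nψ j * nv j)))
      ≤ M * (Real.sqrt (∑ j : ZMod N, (cnφ j ^2 + nψ j ^2))
        * Real.sqrt (∑ j : ZMod N, (cnw j ^2 + nv j ^2))) := by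
    have := group_bound (N := N) (c * β * (qu:ℝ)^2) (c * (τ/c^2) * ((qv:ℝ)+1)^2) M
      hb0 ht0' hM1 hM2' cnφ nψ cnw nv 0 0
    simpa using this
  have B8 : (∑ j : ZMod N, ((c * β * (qu:ℝ)^2) * (cnφ j * cnw (j + 1))
        + (c * (τ/c^2) * ((qv:ℝ)+1)^2) * (nψ j * nv (j + 1))))
      ≤ M * (Real.sqrt (∑ j : ZMod N, (cnφ j ^2 + nψ j ^2))
        * Real.sqrt (∑ j : ZMod N, (cnw j ^2 + nv j ^2))) := by
    have := group_bound (N := N) (c * β * (qu:ℝ)^2) (c * (τ/c^2) * ((qv:ℝ)+1)^2) M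
      hb0 ht0' hM1 hM2' cnφ nψ cnw nv 1 1
    simpa using this
  rw [hSB, hSA] at B1 B2 B3 B4
  rw [hSB, hSA'] at B5 B6 B8
  -- assemble
  have split : (∑ j : ZMod N,
        ((|α| * K * (cnφ j * nv (j - 1)) + |α| * K * (nψ j * cnw j))
        + (|α| * K * (cnφ j * nv j) + |α| * K * (nψ j * cnw (j + 1)))
        + (|1 - α| * K * (cnφ j * nv j) + |1 - α| * K * (nψ j * cnw (j - 1)))
        + (|1 - α| * K * (cnφ j * nv (j + 1)) + |1 - α| * K * (nψ j * cnw j))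
        + ((c * β * (qu:ℝ)^2) * (cnφ j * cnw (j - 1)) + (c * (τ/c^2) * ((qv:ℝ)+1)^2) * (nψ j * nv (j - 1)))
        + ((c * β * (qu:ℝ)^2) * (cnφ j * cnw j) + (c * (τ/c^2) * ((qv:ℝ)+1)^2) * (nψ j * nv j))
        + ((c * β * (qu:ℝ)^2) * (cnφ j * cnw j) + (c * (τ/c^2) * ((qv:ℝ)+1)^2) * (nψ j * nv j))
        + ((c * β * (qu:ℝ)^2) * (cnφ j * cnw (j + 1)) + (c * (τ/c^2) * ((qv:ℝ)+1)^2) * (nψ j * nv (j + 1)))))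
      = (∑ j : ZMod N, (|α| * K * (cnφ j * nv (j - 1)) + |α| * K * (nψ j * cnw j)))
      + (∑ j : ZMod N, (|α| * K * (cnφ j * nv j) + |α| * K * (nψ j * cnw (j + 1))))
      + (∑ j : ZMod N, (|1 - α| * K * (cnφ j * nv j) + |1 - α| * K * (nψ j * cnw (j - 1))))
      + (∑ j : ZMod N, (|1 - α| * K * (cnφ j * nv (j + 1)) + |1 - α| * K * (nψ j * cnw j)))
      + (∑ j : ZMod N, ((c * β * (qu:ℝ)^2) * (cnφ j * cnw (j - 1)) + (c * (τ/c^2) * ((qv:ℝ)+1)^2) * (nψ j * nv (j - 1))))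
      + (∑ j : ZMod N, ((c * β * (qu:ℝ)^2) * (cnφ j * cnw j) + (c * (τ/c^2) * ((qv:ℝ)+1)^2) * (nψ j * nv j)))
      + (∑ j : ZMod N, ((c * β * (qu:ℝ)^2) * (cnφ j * cnw j) + (c * (τ/c^2) * ((qv:ℝ)+1)^2) * (nψ j * nv j)))
      + (∑ j : ZMod N, ((c * β * (qu:ℝ)^2) * (cnφ j * cnw (j + 1)) + (c * (τ/c^2) * ((qv:ℝ)+1)^2) * (nψ j * nv (j + 1)))) := by
    rw [← Finset.sum_add_distrib, ← Finset.sum_add_distrib, ← Finset.sum_add_distrib,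
      ← Finset.sum_add_distrib, ← Finset.sum_add_distrib, ← Finset.sum_add_distrib,
      ← Finset.sum_add_distrib]
  have hch : (0:ℝ) ≤ c / h := by positivity
  calc Λ₂ + Λ₃
      ≤ ∑ j : ZMod N, c^2/h *
        ((qu:ℝ) * nφ j * (HB j + HB (j+1)) + ((qv:ℝ)+1) * nψ j * (GB j + GB (j+1))) := step1
    _ = c/h * ∑ j : ZMod N, _ := step2
    _ ≤ c/h * ((2 * M + (|α| + |1 - α|) * K) * 2 *
        (Real.sqrt (c ^ 2 * brokenNormSq N h w + brokenNormSq N h v)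
          * Real.sqrt (c ^ 2 * brokenNormSq N h φ + brokenNormSq N h ψ))) := by
        apply mul_le_mul_of_nonneg_left _ hch
        rw [split]
        have total := add_le_add (add_le_add (add_le_add (add_le_add (add_le_add
          (add_le_add (add_le_add B1 B2) B3) B4) B5) B6) B6) B8
        calc _ ≤ _ := total
          _ = (2 * M + (|α| + |1 - α|) * K) * 2 *
            (Real.sqrt (c ^ 2 * brokenNormSq N h w + brokenNormSq N h v)
              * Real.sqrt (c ^ 2 * brokenNormSq N h φ + brokenNormSq N h ψ)) := by ring
    _ = 2 * (c / h)
        * (2 * max (c * β * (qu : ℝ) ^ 2) (τ / c * ((qv : ℝ) + 1) ^ 2)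
            + (|α| + |1 - α|) * ((qv : ℝ) + 1) * (qu : ℝ))
        * Real.sqrt (c ^ 2 * brokenNormSq N h w + brokenNormSq N h v)
        * Real.sqrt (c ^ 2 * brokenNormSq N h φ + brokenNormSq N h ψ) := by
        rw [hK, hM]; ring

end MainProof
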